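/- arXiv:2502.05306 — 3 statements merged into one kernel-verified Lean document; each statement's English description precedes it below -/
import Mathlib

section
/- In a dagger category, if f∂ : B ⟶ A is a †-Drazin inverse of f : A ⟶ B, then (f∂)† : A ⟶ B is a †-Drazin inverse of f† : B ⟶ A. -/
open CategoryTheory

universe v u

/-- A dagger on a category: an identity-on-objects contravariant involution. -/
structure Dagger (C : Type u) [Category.{v} C] where
  dag : ∀ {X Y : C}, (X ⟶ Y) → (Y ⟶ X)
  dag_id : ∀ X : C, dag (𝟙 X) = 𝟙 X
  dag_comp : ∀ {X Y Z : C} (f : X ⟶ Y) (g : Y ⟶ Z), dag (f ≫ g) = dag g ≫ dag f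
  dag_dag : ∀ {X Y : C} (f : X ⟶ Y), dag (dag f) = f

/-- Iterated composition power of an endomorphism, with `cpow x 0 = 𝟙 A`. -/
def cpow {C : Type u} [Category.{v} C] {A : C} (x : A ⟶ A) : ℕ → (A ⟶ A)
  | 0 => 𝟙 A
  | n + 1 => cpow x n ≫ x

/-- `p` is a †-Drazin inverse of `f`. -/
def IsDagDrazinInv {C : Type u} [Category.{v} C] (D : Dagger C)
    {A B : C} (f : A ⟶ B) (p : B ⟶ A) : Prop :=
  (∃ k : ℕ, cpow (f ≫ D.dag f) k ≫ f ≫ p = cpow (f ≫ D.dag f) k ∧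
    p ≫ f ≫ cpow (D.dag f ≫ f) k = cpow (D.dag f ≫ f) k) ∧
  p ≫ f ≫ p = p ∧
  D.dag (f ≫ p) = f ≫ p ∧
  D.dag (p ≫ f) = p ≫ f

attribute [simp] Dagger.dag_id Dagger.dag_comp Dagger.dag_dag

section

variable {C : Type u} [Category.{v} C]

theorem cpow_succ' {A : C} (x : A ⟶ A) (n : ℕ) : cpow x (n + 1) = x ≫ cpow x n := by
  induction n with
  | zero => simp [cpow]
  | succ n ih =>
    conv_lhs => rw [cpow, ih, Category.assoc]
    rfl

@[simp]
theorem Dagger.dag_cpow (D : Dagger C) {A : C} (x : A ⟶ A) (n : ℕ) :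
    D.dag (cpow x n) = cpow (D.dag x) n := by
  induction n with
  | zero => simp [cpow]
  | succ n ih => rw [cpow, D.dag_comp, ih, cpow_succ']

end

/-- If `p` is a †-Drazin inverse of `f`, then `p†` is a †-Drazin inverse of `f†`. -/
theorem dagDrazinInv_dag {C : Type u} [Category.{v} C] (D : Dagger C)
    {A B : C} (f : A ⟶ B) (p : B ⟶ A) (h : IsDagDrazinInv D f p) :
    IsDagDrazinInv D (D.dag f) (D.dag p) := by
  -- Each axiom for `(f†, p†)` is the dagger of one for `(f, p)` (the halves of D†.1 and
  -- D†.3/D†.4 trade places), since `(f ≫ f†)^k` and `(f† ≫ f)^k` are self-adjoint.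
  obtain ⟨⟨k, hfp_pow, hpf_pow⟩, hpfp, hfp, hpf⟩ := h
  refine ⟨⟨k, ?_, ?_⟩, ?_, ?_, ?_⟩
  · simpa using congrArg D.dag hpf_pow
  · simpa using congrArg D.dag hfp_pow
  · simpa using congrArg D.dag hpfp
  · simpa using congrArg D.dag hpf
  · simpa using congrArg D.dag hfp
end

section
/- In a dagger category, if f∂ : B ⟶ A is a †-Drazin inverse of f : A ⟶ B, then f ≫ f∂ : A ⟶ A and f∂ ≫ f : B ⟶ B are partial isometries, and each is its own †-Drazin inverse: f ≫ f∂ is a †-Drazin inverse of f ≫ f∂, and f∂ ≫ f is a †-Drazin inverse of f∂ ≫ f. -/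
open CategoryTheory

universe v u

/-! The projections `f ≫ p` and `p ≫ f` are idempotent by [D†.2] and self-adjoint by [D†.3] and
[D†.4]; a self-adjoint idempotent `e` satisfies `e ≫ e† ≫ e = e ≫ e ≫ e = e`, and it is its own
†-Drazin inverse with `k = 1`, since then `e ≫ e† = e† ≫ e = e`. -/

section

variable {C : Type u} [Category.{v} C]

@[simp]
lemma cpow_one {A : C} (x : A ⟶ A) : cpow x 1 = x :=
  Category.id_comp x

variable (D : Dagger C)

lemma partialIsometry_of_idempotent_of_dag_eq {A : C} {e : A ⟶ A} (hee : e ≫ e = e)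
    (hd : D.dag e = e) : e ≫ D.dag e ≫ e = e := by
  rw [hd, hee, hee]

lemma isDagDrazinInv_self_of_idempotent_of_dag_eq {A : C} {e : A ⟶ A} (hee : e ≫ e = e)
    (hd : D.dag e = e) : IsDagDrazinInv D e e := by
  refine ⟨⟨1, ?_, ?_⟩, ?_, ?_, ?_⟩ <;> simp only [cpow_one, hd, hee]

namespace IsDagDrazinInv

variable {D} {A B : C} {f : A ⟶ B} {p : B ⟶ A}

lemma hom_comp_inv_idempotent (h : IsDagDrazinInv D f p) : (f ≫ p) ≫ (f ≫ p) = f ≫ p := by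
  rw [Category.assoc, h.2.1]

lemma inv_comp_hom_idempotent (h : IsDagDrazinInv D f p) : (p ≫ f) ≫ (p ≫ f) = p ≫ f := by
  rw [Category.assoc, reassoc_of% h.2.1]

end IsDagDrazinInv

end

/-- If `p` is a †-Drazin inverse of `f`, then `f ≫ p` and `p ≫ f` are partial isometries
and each is its own †-Drazin inverse. -/
theorem dagDrazinInv_idempotents {C : Type u} [Category.{v} C] (D : Dagger C)
    {A B : C} (f : A ⟶ B) (p : B ⟶ A) (h : IsDagDrazinInv D f p) :
    (f ≫ p) ≫ D.dag (f ≫ p) ≫ (f ≫ p) = f ≫ p ∧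
    (p ≫ f) ≫ D.dag (p ≫ f) ≫ (p ≫ f) = p ≫ f ∧
    IsDagDrazinInv D (f ≫ p) (f ≫ p) ∧
    IsDagDrazinInv D (p ≫ f) (p ≫ f) := by
  have hfp_idem := h.hom_comp_inv_idempotent
  have hpf_idem := h.inv_comp_hom_idempotent
  obtain ⟨-, -, hfp_dag, hpf_dag⟩ := h
  exact ⟨partialIsometry_of_idempotent_of_dag_eq D hfp_idem hfp_dag,
    partialIsometry_of_idempotent_of_dag_eq D hpf_idem hpf_dag,
    isDagDrazinInv_self_of_idempotent_of_dag_eq D hfp_idem hfp_dag,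
    isDagDrazinInv_self_of_idempotent_of_dag_eq D hpf_idem hpf_dag⟩
end

section
/- In a dagger category, a map f : A ⟶ B is †-Drazin if and only if the opposing pair (f, f†) is Drazin, i.e. there exist maps p : B ⟶ A and q : A ⟶ B such that: [DV.1] there exists k ∈ ℕ with (f ≫ f†)^k ≫ f ≫ p = (f ≫ f†)^k and (f† ≫ f)^k ≫ f† ≫ q = (f† ≫ f)^k; [DV.2] p ≫ f ≫ p = p and q ≫ f† ≫ q = q; [DV.3] f ≫ p = q ≫ f† and p ≫ f = f† ≫ q. Moreover, in this case p is the †-Drazin inverse of f and q = p†. -/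
open CategoryTheory

universe v u

/-- `(p, q)` is a Drazin inverse of the opposing pair `(f, g)`. -/
def IsOpposingDrazinInv {C : Type u} [Category.{v} C] {A B : C}
    (f : A ⟶ B) (g : B ⟶ A) (p : B ⟶ A) (q : A ⟶ B) : Prop :=
  (∃ k : ℕ, cpow (f ≫ g) k ≫ f ≫ p = cpow (f ≫ g) k ∧
    cpow (g ≫ f) k ≫ g ≫ q = cpow (g ≫ f) k) ∧
  (p ≫ f ≫ p = p ∧ q ≫ g ≫ q = q) ∧
  (f ≫ p = q ≫ g ∧ p ≫ f = g ≫ q)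

/-!
If `(p, q)` is a Drazin inverse of the opposing pair `(f, f†)`, applying the dagger to all
its axioms shows that `(q†, p†)` is one as well. Drazin inverses of opposing pairs are unique:
`q ≫ p` is the Drazin inverse of the endomorphism `f ≫ f†`, which is unique as in any monoid,
and it determines `p = f† ≫ q ≫ p`, and symmetrically `q`. Hence `q = p†`, and for pairs of
the form `(p, p†)` the axioms [DV.1–3] are exactly [D†.1–4].
-/

structure IsDrazinInv {M : Type*} [Monoid M] (a b : M) : Prop where
  exists_mul_pow_succ : ∃ k : ℕ, b * a ^ (k + 1) = a ^ k
  mul_mul_self : b * a * b = b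
  commute : Commute a b

namespace IsDrazinInv

variable {M : Type*} [Monoid M] {a b b' : M}

lemma isIdempotentElem_mul (hb : IsDrazinInv a b) : IsIdempotentElem (b * a) := by
  rw [IsIdempotentElem, ← mul_assoc, hb.mul_mul_self]

lemma eventually_mul_mul_pow (hb : IsDrazinInv a b) :
    ∀ᶠ n in Filter.atTop, b * a * a ^ n = a ^ n := by
  obtain ⟨k, hk⟩ := hb.exists_mul_pow_succ
  refine Filter.eventually_atTop.2 ⟨k, fun n hn => ?_⟩
  obtain ⟨j, rfl⟩ := Nat.exists_eq_add_of_le hn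
  rw [mul_assoc, ← pow_succ', add_right_comm, pow_add, ← mul_assoc, hk, pow_add]

lemma eventually_pow_mul_mul (hb : IsDrazinInv a b) :
    ∀ᶠ n in Filter.atTop, a ^ n * (b * a) = a ^ n :=
  hb.eventually_mul_mul_pow.mono fun n hn =>
    (((hb.commute.symm.mul_left (Commute.refl a)).pow_right n).eq.symm.trans hn)

lemma mul_eq_pow_mul_pow (hb : IsDrazinInv a b) {n : ℕ} (hn : n ≠ 0) :
    b * a = b ^ n * a ^ n := by
  rw [← hb.commute.symm.mul_pow, hb.isIdempotentElem_mul.pow_eq hn]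

lemma mul_eq_pow_mul_pow' (hb : IsDrazinInv a b) {n : ℕ} (hn : n ≠ 0) :
    b * a = a ^ n * b ^ n := by
  rw [hb.mul_eq_pow_mul_pow hn, (hb.commute.pow_pow n n).eq]

lemma mul_mul_eq_self (hb : IsDrazinInv a b) : b * (b * a) = b := by
  rw [← hb.commute.eq, ← mul_assoc, hb.mul_mul_self]

-- `b a` and `b' a` fix `a ^ n` for large `n`, which forces `b a = b' a * b a = b' a`.
lemma mul_eq_mul (hb : IsDrazinInv a b) (hb' : IsDrazinInv a b') : b * a = b' * a := by
  obtain ⟨n, hpow, hpow', hn⟩ := (hb.eventually_pow_mul_mul.and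
    (hb'.eventually_mul_mul_pow.and (Filter.eventually_ne_atTop 0))).exists
  calc b * a = b' * a * (b * a) := by
        rw [hb.mul_eq_pow_mul_pow' hn, ← mul_assoc, hpow']
    _ = b' * a := by
        rw [hb'.mul_eq_pow_mul_pow hn, mul_assoc, hpow]

theorem unique (hb : IsDrazinInv a b) (hb' : IsDrazinInv a b') : b = b' :=
  calc b = b * (b' * a) := by rw [← hb.mul_eq_mul hb', hb.mul_mul_eq_self]
    _ = b' * (b' * a) := by rw [← hb'.commute.eq, ← mul_assoc, hb.mul_eq_mul hb', mul_assoc]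
    _ = b' := hb'.mul_mul_eq_self

end IsDrazinInv

section Category

variable {C : Type u} [Category.{v} C]

lemma cpow_eq_pow {A : C} (x : A ⟶ A) (n : ℕ) : cpow x n = End.of x ^ n := by
  induction n with
  | zero => rfl
  | succ n ih => rw [pow_succ', ← ih]; rfl

lemma comp_cpow_comm {A : C} {u x : A ⟶ A} (h : u ≫ x = x ≫ u) (n : ℕ) :
    u ≫ cpow x n = cpow x n ≫ u := by
  induction n with
  | zero => simp [cpow]
  | succ n ih => simp only [cpow, ← Category.assoc, ih]; simp only [Category.assoc, h]

namespace Dagger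

variable (D : Dagger C)

lemma dag_injective {X Y : C} : Function.Injective (D.dag : (X ⟶ Y) → (Y ⟶ X)) :=
  Function.LeftInverse.injective D.dag_dag

lemma dag_cpow_s18 {A : C} (x : A ⟶ A) (n : ℕ) : D.dag (cpow x n) = cpow (D.dag x) n := by
  induction n with
  | zero => exact D.dag_id A
  | succ n ih => rw [cpow, D.dag_comp, ih, comp_cpow_comm rfl]; rfl

end Dagger

namespace IsOpposingDrazinInv

variable {A B : C} {f : A ⟶ B} {g : B ⟶ A} {p p' : B ⟶ A} {q q' : A ⟶ B}

lemma symm (h : IsOpposingDrazinInv f g p q) : IsOpposingDrazinInv g f q p :=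
  let ⟨⟨k, hfp, hgq⟩, ⟨hpfp, hqgq⟩, hfp_qg, hpf_gq⟩ := h
  ⟨⟨k, hgq, hfp⟩, ⟨hqgq, hpfp⟩, hpf_gq.symm, hfp_qg.symm⟩

lemma comp_comp_comm (h : IsOpposingDrazinInv f g p q) :
    (q ≫ p) ≫ f ≫ g = (f ≫ g) ≫ q ≫ p := by
  obtain ⟨-, -, hfp, hpf⟩ := h
  calc (q ≫ p) ≫ f ≫ g = (q ≫ g) ≫ q ≫ g := by
        simp only [Category.assoc, reassoc_of% hpf]
    _ = (f ≫ p) ≫ f ≫ p := by rw [hfp]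
    _ = (f ≫ g) ≫ q ≫ p := by simp only [Category.assoc, reassoc_of% hpf]

-- Multiplication in `End A` is composition in the reverse order.
lemma isDrazinInv_comp (h : IsOpposingDrazinInv f g p q) :
    IsDrazinInv (End.of (f ≫ g)) (End.of (q ≫ p)) := by
  have hcomm := h.comp_comp_comm
  obtain ⟨⟨k, hk, -⟩, ⟨hpfp, -⟩, -, hpf⟩ := h
  refine ⟨⟨k, ?_⟩, ?_, hcomm⟩
  · rw [← cpow_eq_pow, ← cpow_eq_pow]
    show (cpow (f ≫ g) k ≫ f ≫ g) ≫ q ≫ p = cpow (f ≫ g) k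
    simp only [Category.assoc]
    rw [← reassoc_of% hpf, hpfp, hk]
  · show (q ≫ p) ≫ (f ≫ g) ≫ q ≫ p = q ≫ p
    rw [Category.assoc, Category.assoc, ← reassoc_of% hpf, hpfp, hpfp]

lemma eq_comp_comp (h : IsOpposingDrazinInv f g p q) : p = g ≫ q ≫ p := by
  obtain ⟨-, ⟨hpfp, -⟩, -, hpf⟩ := h
  rw [← Category.assoc, ← hpf, Category.assoc, hpfp]

lemma left_unique (h : IsOpposingDrazinInv f g p q) (h' : IsOpposingDrazinInv f g p' q') :
    p = p' := by
  have hqp : q ≫ p = q' ≫ p' := h.isDrazinInv_comp.unique h'.isDrazinInv_comp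
  rw [h.eq_comp_comp, h'.eq_comp_comp, hqp]

lemma right_unique (h : IsOpposingDrazinInv f g p q) (h' : IsOpposingDrazinInv f g p' q') :
    q = q' :=
  h.symm.left_unique h'.symm

lemma comp_comp_cpow (h : IsOpposingDrazinInv f g p q) {k : ℕ}
    (hk : cpow (f ≫ g) k ≫ f ≫ p = cpow (f ≫ g) k) :
    q ≫ g ≫ cpow (f ≫ g) k = cpow (f ≫ g) k := by
  obtain ⟨-, -, hfp, hpf⟩ := h
  have hcomm : (f ≫ p) ≫ f ≫ g = (f ≫ g) ≫ f ≫ p := by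
    rw [Category.assoc, reassoc_of% hpf, hfp, Category.assoc]
  rw [← Category.assoc, ← hfp, comp_cpow_comm hcomm, hk]

lemma dag (D : Dagger C) (h : IsOpposingDrazinInv f g p q) :
    IsOpposingDrazinInv (D.dag g) (D.dag f) (D.dag q) (D.dag p) := by
  have ⟨⟨k, hk, hk'⟩, ⟨hpfp, hqgq⟩, hfp_qg, hpf_gq⟩ := h
  refine ⟨⟨k, ?_, ?_⟩, ⟨?_, ?_⟩, ?_, ?_⟩ <;> apply D.dag_injective <;>
    simp only [Dagger.dag_comp, Dagger.dag_dag, Dagger.dag_cpow_s18, Category.assoc]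
  exacts [h.comp_comp_cpow hk, h.symm.comp_comp_cpow hk', hqgq, hpfp, hfp_qg.symm,
    hpf_gq.symm]

lemma eq_dag {D : Dagger C} (h : IsOpposingDrazinInv f (D.dag f) p q) : q = D.dag p :=
  h.right_unique (D.dag_dag f ▸ h.dag D)

lemma isDagDrazinInv {D : Dagger C} (h : IsOpposingDrazinInv f (D.dag f) p q) :
    IsDagDrazinInv D f p := by
  obtain rfl := h.eq_dag
  have ⟨⟨k, hk, hk'⟩, ⟨hpfp, _⟩, hfp_qg, hpf_gq⟩ := h
  exact ⟨⟨k, hk, h.symm.comp_comp_cpow hk'⟩, hpfp, (D.dag_comp f p).trans hfp_qg.symm,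
    (D.dag_comp p f).trans hpf_gq.symm⟩

end IsOpposingDrazinInv

lemma IsDagDrazinInv.isOpposingDrazinInv {D : Dagger C} {A B : C} {f : A ⟶ B} {p : B ⟶ A}
    (h : IsDagDrazinInv D f p) : IsOpposingDrazinInv f (D.dag f) p (D.dag p) := by
  obtain ⟨⟨k, hk, hk'⟩, hpfp, hfp, hpf⟩ := h
  refine ⟨⟨k, hk, ?_⟩, ⟨hpfp, ?_⟩, hfp.symm.trans (D.dag_comp f p),
    hpf.symm.trans (D.dag_comp p f)⟩ <;> apply D.dag_injective <;>
    simp only [Dagger.dag_comp, Dagger.dag_dag, Dagger.dag_cpow_s18, Category.assoc]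
  exacts [hk', hpfp]

end Category

/-- `f` is †-Drazin iff the opposing pair `(f, f†)` is Drazin; moreover in this case the
pair consists of the †-Drazin inverse of `f` and its adjoint. -/
theorem dagDrazin_iff_opposingPair_drazin {C : Type u} [Category.{v} C] (D : Dagger C)
    {A B : C} (f : A ⟶ B) :
    ((∃ p : B ⟶ A, IsDagDrazinInv D f p) ↔
      ∃ (p : B ⟶ A) (q : A ⟶ B), IsOpposingDrazinInv f (D.dag f) p q) ∧
    (∀ (p : B ⟶ A) (q : A ⟶ B), IsOpposingDrazinInv f (D.dag f) p q →
      IsDagDrazinInv D f p ∧ q = D.dag p) :=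
  ⟨⟨fun ⟨p, hp⟩ => ⟨p, D.dag p, hp.isOpposingDrazinInv⟩,
      fun ⟨p, _, h⟩ => ⟨p, h.isDagDrazinInv⟩⟩,
    fun _ _ h => ⟨h.isDagDrazinInv, h.eq_dag⟩⟩
end
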